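/- arXiv:2506.07415 — 3 statements merged into one kernel-verified Lean document; each statement's English description precedes it below -/
import Mathlib

section
/- Let b>0, α<1 and β ≥ 1/(1−α). Assume f satisfies (A1) and (A3) with exponent β, and g satisfies (A2) with exponent α. Then there exists L₀>0 such that for every L ≥ L₀ there exists c_L > 0 with lim_{L→∞} c_L = ∞ such that the function v_L defined by: v_L(x,t) := ((3b−x)/(2b) − c_L t)^{−L} for b−2bc_Lt ≤ x < b and 0 < t < 1/c_L; v_L(x,t) := 1 for −b < x < b−2bc_Lt and 0 ≤ t < 1/c_L; v_L(x,t) := ((b−x)/(2b))^{−L} for −b < x < b and t ≥ 1/c_L; satisfies (v_L)_t ≤ f((1/2)g((v_L)_x)(v_L)_{xx}) on (−b,b)×(0,∞) in the viscosity sense. -/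
open Filter Set Topology

noncomputable section

/-- The parabolic cylinder `Q = (-b,b) × (0,∞)`. -/
def Qset (b : ℝ) : Set (ℝ × ℝ) := Ioo (-b) b ×ˢ Ioi (0:ℝ)

/-- The cylinder `Q₀ = (-b,b) × [0,∞)`. -/
def Q0set (b : ℝ) : Set (ℝ × ℝ) := Ioo (-b) b ×ˢ Ici (0:ℝ)

/-- Partial derivative in time. -/
def pT (φ : ℝ × ℝ → ℝ) (p : ℝ × ℝ) : ℝ := deriv (fun t => φ (p.1, t)) p.2

/-- Partial derivative in space. -/
def pX (φ : ℝ × ℝ → ℝ) (p : ℝ × ℝ) : ℝ := deriv (fun x => φ (x, p.2)) p.1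

/-- Second partial derivative in space. -/
def pXX (φ : ℝ × ℝ → ℝ) (p : ℝ × ℝ) : ℝ := deriv (fun x => pX φ (x, p.2)) p.1

/-- (A1): `f` is continuous, strictly increasing, `f 0 = 0`, `f(s) → ±∞` as `s → ±∞`. -/
def A1 (f : ℝ → ℝ) : Prop :=
  Continuous f ∧ StrictMono f ∧ f 0 = 0 ∧ Tendsto f atTop atTop ∧ Tendsto f atBot atBot

/-- (A2) with exponent `α`: `g` is continuous, positive, and `|s|^α g(s)` has positive
limits as `s → ±∞`. -/
def A2 (g : ℝ → ℝ) (α : ℝ) : Prop :=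
  Continuous g ∧ (∀ s, 0 < g s) ∧
  ∃ Cgp Cgm : ℝ, 0 < Cgp ∧ 0 < Cgm ∧
    Tendsto (fun s => |s| ^ α * g s) atTop (𝓝 Cgp) ∧
    Tendsto (fun s => |s| ^ α * g s) atBot (𝓝 Cgm)

/-- (A3) with exponent `β > 0`: `|s|^(-β) f s → ±C_{f±}` as `s → ±∞`. -/
def A3 (f : ℝ → ℝ) (β : ℝ) : Prop :=
  0 < β ∧ ∃ Cfp Cfm : ℝ, 0 < Cfp ∧ 0 < Cfm ∧
    Tendsto (fun s => |s| ^ (-β) * f s) atTop (𝓝 Cfp) ∧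
    Tendsto (fun s => |s| ^ (-β) * f s) atBot (𝓝 (-Cfm))

/-- (B1): `u₀ ∈ C([-b,b])`. -/
def B1 (b : ℝ) (u0 : ℝ → ℝ) : Prop := ContinuousOn u0 (Icc (-b) b)

/-- (B2): `u₀ ∈ C((-b,b))`, diverging to `∞` at `±b` with polynomial rate bound. -/
def B2 (b : ℝ) (u0 : ℝ → ℝ) : Prop :=
  ContinuousOn u0 (Ioo (-b) b) ∧
  Tendsto u0 (𝓝[<] b) atTop ∧ Tendsto u0 (𝓝[>] (-b)) atTop ∧
  ∃ γ : ℝ, 0 < γ ∧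
    (∃ C : ℝ, ∀ᶠ x in 𝓝[<] b, u0 x * (b - x) ^ γ ≤ C) ∧
    (∃ C : ℝ, ∀ᶠ x in 𝓝[>] (-b), u0 x * (b + x) ^ γ ≤ C)

/-- `ψ_γ(s) = s^(-γ)` for `γ > 0` and `ψ₀(s) = -log s`. -/
def psi (γ : ℝ) (s : ℝ) : ℝ := if 0 < γ then s ^ (-γ) else -Real.log s

/-- (B3): `u₀ ∈ C((-b,b))` behaves like `D₊ ψ_{γ₊}(b-x)` near `b` and like
`D₋ ψ_{γ₋}(b+x)` near `-b`, up to constants. -/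
def B3 (b : ℝ) (u0 : ℝ → ℝ) (γp γm Dp Dm : ℝ) : Prop :=
  ContinuousOn u0 (Ioo (-b) b) ∧ 0 ≤ γp ∧ 0 ≤ γm ∧ 0 < Dp ∧ 0 < Dm ∧
  ∃ Cp Cm : ℝ,
    Tendsto (fun x => u0 x - Dp * psi γp (b - x)) (𝓝[<] b) (𝓝 Cp) ∧
    Tendsto (fun x => u0 x - Dm * psi γm (b + x)) (𝓝[>] (-b)) (𝓝 Cm)

/-- Viscosity sub-solution of `u_t - f(g(u_x) u_{xx}) = 0` in `Q`. -/
def IsSubSol (b : ℝ) (f g : ℝ → ℝ) (u : ℝ × ℝ → ℝ) : Prop :=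
  UpperSemicontinuousOn u (Q0set b) ∧
  ∀ φ : ℝ × ℝ → ℝ, ContDiffOn ℝ 2 φ (Qset b) →
    ∀ p ∈ Qset b, IsLocalMaxOn (fun q => u q - φ q) (Qset b) p →
      pT φ p - f (g (pX φ p) * pXX φ p) ≤ 0

/-- The singular Dirichlet boundary condition at time `t`:
`v(x,t) → ∞` as `x → ±b`. -/
def SingularBC (b : ℝ) (v : ℝ × ℝ → ℝ) (t : ℝ) : Prop :=
  Tendsto (fun x => v (x, t)) (𝓝[<] b) atTop ∧
  Tendsto (fun x => v (x, t)) (𝓝[>] (-b)) atTop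

/-- Viscosity super-solution of `u_t - f(g(u_x) u_{xx}) = 0` in `Q` together with the
singular Dirichlet boundary condition. -/
def IsSuperSol (b : ℝ) (f g : ℝ → ℝ) (v : ℝ × ℝ → ℝ) : Prop :=
  LowerSemicontinuousOn v (Q0set b) ∧
  (∀ φ : ℝ × ℝ → ℝ, ContDiffOn ℝ 2 φ (Qset b) →
    ∀ p ∈ Qset b, IsLocalMinOn (fun q => v q - φ q) (Qset b) p →
      0 ≤ pT φ p - f (g (pX φ p) * pXX φ p)) ∧
  (∀ t : ℝ, 0 < t → SingularBC b v t)

/-- Upper semicontinuous envelope relative to `Q₀`. -/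
def uscEnv (b : ℝ) (u : ℝ × ℝ → ℝ) (p : ℝ × ℝ) : ℝ := limsup u (𝓝[Q0set b] p)

/-- Lower semicontinuous envelope relative to `Q₀`. -/
def lscEnv (b : ℝ) (u : ℝ × ℝ → ℝ) (p : ℝ × ℝ) : ℝ := liminf u (𝓝[Q0set b] p)

/-- Viscosity solution of the initial value problem: `u*` is a sub-solution, `u_*` is a
super-solution (including the singular Dirichlet condition), and both envelopes agree
with `u₀` at `t = 0`. -/
def IsVSol (b : ℝ) (f g : ℝ → ℝ) (u0 : ℝ → ℝ) (u : ℝ × ℝ → ℝ) : Prop :=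
  IsSubSol b f g (uscEnv b u) ∧ IsSuperSol b f g (lscEnv b u) ∧
  ∀ x ∈ Ioo (-b) b, uscEnv b u (x, 0) = u0 x ∧ lscEnv b u (x, 0) = u0 x

/-- The explicit piecewise sub-solution of Definition 4.7. -/
def subVL (b L c : ℝ) (q : ℝ × ℝ) : ℝ :=
  if 1 / c ≤ q.2 then ((b - q.1) / (2 * b)) ^ (-L)
  else if b - 2 * b * c * q.2 ≤ q.1 then ((3 * b - q.1) / (2 * b) - c * q.2) ^ (-L)
  else 1

/-! On `Q` the function `subVL b L c` equals `max 1 (z ^ (-L))`, where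
`z = (3b - x)/(2b) - min (c t) 1` is the base of a front that moves left at speed `2bc` and
freezes at `t = 1/c`. A smooth `φ` touching this maximum from above touches one of the two
pieces. At the constant piece `φ` has a local minimum, so `φ_t = φ_x = 0 ≤ φ_xx` and the
inequality reduces to `f 0 = 0`. At the power piece `φ_x` equals and `φ_xx` dominates the
corresponding derivative of `z ^ (-L)`, while `φ_t ≤ L c z ^ (-L-1)` because `z` decreases at
rate at most `c`; so it suffices that `z ^ (-L)` is a classical sub-solution where `z ≤ 1`.
Writing `P = L/(2b) z ^ (-L-1) ≥ L/(2b)` for its gradient, the power-law bounds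
`g(s) ≳ s ^ (-α)` and `f(s) ≳ s ^ β` reduce this to `2b c P ≲ (L P ^ (1-α)) ^ β`, which holds
with `c ≈ L ^ β` since `P ≥ 1` and `(1 - α) β ≥ 1`. -/

theorem IsMaxFilter.sub_of_le_of_eq {α : Type*} {l : Filter α} {u v φ : α → ℝ} {a : α}
    (h : IsMaxFilter (fun x => v x - φ x) l a) (hle : ∀ᶠ x in l, u x ≤ v x) (heq : u a = v a) :
    IsMaxFilter (fun x => u x - φ x) l a := by
  filter_upwards [h, hle] with x hx hux
  linarith

theorem IsLocalMax.deriv_deriv_nonpos {ψ : ℝ → ℝ} {a : ℝ} (h : IsLocalMax ψ a)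
    (hc : ContinuousAt ψ a) : deriv (deriv ψ) a ≤ 0 := by
  by_contra! hpos
  -- by the second derivative test `a` would also be a local minimum, so `ψ` is locally constant
  have hconst : ψ =ᶠ[𝓝 a] fun _ => ψ a :=
    (h.and (isLocalMin_of_deriv_deriv_pos hpos h.deriv_eq_zero hc)).mono
      fun x hx => le_antisymm hx.1 hx.2
  have : deriv (deriv ψ) a = 0 := by simp [hconst.deriv.deriv_eq]
  exact hpos.ne' this

theorem ContDiffAt.differentiableAt_deriv {u : ℝ → ℝ} {a : ℝ} (hu : ContDiffAt ℝ 2 u a) :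
    DifferentiableAt ℝ (deriv u) a :=
  (hu.derivWithin (m := 1) (by norm_num)).differentiableAt one_ne_zero

theorem IsLocalMax.deriv_eq_and_deriv_deriv_le {u φ : ℝ → ℝ} {a : ℝ}
    (h : IsLocalMax (fun x => u x - φ x) a) (hu : ContDiffAt ℝ 2 u a)
    (hφ : ContDiffAt ℝ 2 φ a) :
    deriv φ a = deriv u a ∧ deriv (deriv u) a ≤ deriv (deriv φ) a := by
  have hderiv : deriv (fun x => u x - φ x) =ᶠ[𝓝 a] fun x => deriv u x - deriv φ x := by
    filter_upwards [hu.eventually (by simp), hφ.eventually (by simp)] with x hux hφx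
    exact deriv_sub (hux.differentiableAt two_ne_zero) (hφx.differentiableAt two_ne_zero)
  have h1 := h.deriv_eq_zero
  have h2 := h.deriv_deriv_nonpos (hu.continuousAt.sub hφ.continuousAt)
  rw [hderiv.self_of_nhds] at h1
  rw [hderiv.deriv_eq, deriv_fun_sub hu.differentiableAt_deriv hφ.differentiableAt_deriv] at h2
  constructor <;> linarith

theorem IsLocalMaxOn.deriv_le_of_Iic {u φ : ℝ → ℝ} {a d : ℝ}
    (h : IsLocalMaxOn (fun t => u t - φ t) (Iic a) a) (hu : HasDerivAt u d a)
    (hφ : DifferentiableAt ℝ φ a) : deriv φ a ≤ d := by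
  have hmem : (-1 : ℝ) ∈ posTangentConeAt (Iic a) a :=
    mem_posTangentConeAt_of_segment_subset (by
      rw [segment_symm, segment_eq_Icc (by linarith)]; exact Icc_subset_Iic_self)
  have := h.hasFDerivWithinAt_nonpos
    (hu.sub hφ.hasDerivAt).hasDerivWithinAt.hasFDerivWithinAt hmem
  simpa only [ContinuousLinearMap.toSpanSingleton_apply, smul_eq_mul, neg_mul, one_mul, neg_sub,
    tsub_le_iff_right, zero_add] using this

theorem hasDerivAt_affine_rpow {a k r x : ℝ} (hx : 0 < a + k * x) :
    HasDerivAt (fun y => (a + k * y) ^ r) (r * k * (a + k * x) ^ (r - 1)) x := by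
  have := (((hasDerivAt_id' x).const_mul k).const_add a).rpow_const (p := r) (Or.inl hx.ne')
  convert this using 1
  ring

theorem contDiffAt_affine_rpow {a k r x : ℝ} (hx : 0 < a + k * x) :
    ContDiffAt ℝ 2 (fun y => (a + k * y) ^ r) x :=
  (Real.contDiffAt_rpow_const_of_ne hx.ne').comp x (f := fun y => a + k * y) (by fun_prop)

theorem deriv_deriv_affine_rpow {a k r x : ℝ} (hx : 0 < a + k * x) :
    deriv (deriv fun y => (a + k * y) ^ r) x = r * (r - 1) * k ^ 2 * (a + k * x) ^ (r - 2) := by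
  have hpos : ∀ᶠ y in 𝓝 x, 0 < a + k * y :=
    (continuous_const.add (continuous_const.mul continuous_id)).continuousAt.eventually
      (lt_mem_nhds hx)
  have hderiv : (deriv fun y => (a + k * y) ^ r) =ᶠ[𝓝 x] fun y => r * k * (a + k * y) ^ (r - 1) :=
    hpos.mono fun y hy => (hasDerivAt_affine_rpow hy).deriv
  rw [hderiv.deriv_eq, ((hasDerivAt_affine_rpow (r := r - 1) hx).const_mul (r * k)).deriv,
    show r - 1 - 1 = r - 2 by ring]
  ring

theorem eventually_half_mul_rpow_le_of_tendsto {h : ℝ → ℝ} {γ C : ℝ} (hC : 0 < C)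
    (hlim : Tendsto (fun s => |s| ^ γ * h s) atTop (𝓝 C)) :
    ∀ᶠ s in atTop, C / 2 * s ^ (-γ) ≤ h s := by
  filter_upwards [hlim.eventually (eventually_ge_nhds (half_lt_self hC)), eventually_gt_atTop 0]
    with s hs hs0
  rw [abs_of_pos hs0] at hs
  calc C / 2 * s ^ (-γ) ≤ s ^ γ * h s * s ^ (-γ) := by gcongr
    _ = h s := by rw [mul_right_comm, ← Real.rpow_add hs0]; simp

theorem A2.exists_mul_rpow_le {g : ℝ → ℝ} {α : ℝ} (hg : A2 g α) :
    ∃ C > 0, ∃ S, ∀ s ≥ S, C * s ^ (-α) ≤ g s := by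
  obtain ⟨-, -, C, -, hC, -, hlim, -⟩ := hg
  exact ⟨C / 2, by positivity, eventually_atTop.1 (eventually_half_mul_rpow_le_of_tendsto hC hlim)⟩

theorem A3.exists_mul_rpow_le {f : ℝ → ℝ} {β : ℝ} (hf : A3 f β) :
    ∃ C > 0, ∃ S, ∀ s ≥ S, C * s ^ β ≤ f s := by
  obtain ⟨-, C, -, hC, -, hlim, -⟩ := hf
  refine ⟨C / 2, by positivity, eventually_atTop.1 ?_⟩
  simpa using eventually_half_mul_rpow_le_of_tendsto hC hlim

theorem le_f_half_g_mul_of_rpow_bounds {f g : ℝ → ℝ} {α β Cf Cg Sf Sg κ P y : ℝ}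
    (hα : α ≤ 1) (hβ : 1 ≤ (1 - α) * β) (hCf : 0 < Cf) (hCg : 0 < Cg) (hκ : 0 ≤ κ)
    (hf : Monotone f) (hfS : ∀ s ≥ Sf, Cf * s ^ β ≤ f s) (hgS : ∀ s ≥ Sg, Cg * s ^ (-α) ≤ g s)
    (hSf : Sf ≤ Cg / 2 * κ) (hP : 1 ≤ P) (hSg : Sg ≤ P) (hy : κ * P ≤ y) :
    Cf * (Cg / 2 * κ) ^ β * P ≤ f (1 / 2 * g P * y) := by
  have hP0 : 0 < P := one_pos.trans_le hP
  have hβ0 : 0 ≤ β := by nlinarith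
  set M := Cg / 2 * κ * P ^ (1 - α) with hM_def
  have hPα : 1 ≤ P ^ (1 - α) := Real.one_le_rpow hP (by linarith)
  have hgP : Cg * P ^ (-α) ≤ g P := hgS P hSg
  have hM : M ≤ 1 / 2 * g P * y := by
    have hgP0 : 0 ≤ g P := (by positivity : 0 ≤ Cg * P ^ (-α)).trans hgP
    calc M = 1 / 2 * (Cg * P ^ (-α)) * (κ * P) := by
          rw [hM_def, sub_eq_neg_add, Real.rpow_add hP0, Real.rpow_one]; ring
      _ ≤ 1 / 2 * g P * y := mul_le_mul (by linarith) hy (by positivity) (by positivity)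
  have hSfM : Sf ≤ M := hSf.trans (le_mul_of_one_le_right (by positivity) hPα)
  calc Cf * (Cg / 2 * κ) ^ β * P
      ≤ Cf * (Cg / 2 * κ) ^ β * (P ^ (1 - α)) ^ β := by
        gcongr
        calc P = P ^ (1 : ℝ) := (Real.rpow_one P).symm
          _ ≤ P ^ ((1 - α) * β) := Real.rpow_le_rpow_of_exponent_le hP hβ
          _ = (P ^ (1 - α)) ^ β := Real.rpow_mul hP0.le _ _
    _ = Cf * M ^ β := by
        rw [hM_def, Real.mul_rpow (x := Cg / 2 * κ) (by positivity) (by positivity)]; ring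
    _ ≤ f M := hfS M hSfM
    _ ≤ f (1 / 2 * g P * y) := hf hM

theorem rpow_profile_classical_subsolution {f g : ℝ → ℝ} {α β Cf Cg Sf Sg b L z : ℝ}
    (hα : α ≤ 1) (hβ : 1 ≤ (1 - α) * β) (hCf : 0 < Cf) (hCg : 0 < Cg) (hb : 0 < b) (hL : 0 ≤ L)
    (hf : Monotone f) (hfS : ∀ s ≥ Sf, Cf * s ^ β ≤ f s) (hgS : ∀ s ≥ Sg, Cg * s ^ (-α) ≤ g s)
    (hSf : Sf ≤ Cg / 2 * (L / (2 * b))) (hSg : max 1 Sg ≤ L / (2 * b)) (hz : z ∈ Ioc (0 : ℝ) 1) :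
    L * (Cf * (Cg / 2 * (L / (2 * b))) ^ β / (2 * b)) * z ^ (-L - 1) ≤
      f (1 / 2 * g (L / (2 * b) * z ^ (-L - 1)) * (L * (L + 1) / (4 * b ^ 2) * z ^ (-L - 2))) := by
  have hκ : 0 ≤ L / (2 * b) := by positivity
  have hw : 1 ≤ z ^ (-L - 1) :=
    Real.one_le_rpow_of_pos_of_le_one_of_nonpos hz.1 hz.2 (by linarith)
  have hw' : 1 ≤ z ^ (-1 : ℝ) :=
    Real.one_le_rpow_of_pos_of_le_one_of_nonpos hz.1 hz.2 (by norm_num)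
  have hP : max 1 Sg ≤ L / (2 * b) * z ^ (-L - 1) := hSg.trans (le_mul_of_one_le_right hκ hw)
  have hy : L / (2 * b) * (L / (2 * b) * z ^ (-L - 1)) ≤
      L * (L + 1) / (4 * b ^ 2) * z ^ (-L - 2) :=
    calc L / (2 * b) * (L / (2 * b) * z ^ (-L - 1))
        = L / (2 * b) * (L / (2 * b)) * z ^ (-L - 1) * 1 := by ring
      _ ≤ L / (2 * b) * ((L + 1) / (2 * b)) * z ^ (-L - 1) * z ^ (-1 : ℝ) := by
          gcongr; linarith
      _ = L * (L + 1) / (4 * b ^ 2) * z ^ (-L - 2) := by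
          rw [mul_assoc _ (z ^ _), ← Real.rpow_add hz.1]; ring_nf
  convert le_f_half_g_mul_of_rpow_bounds hα hβ hCf hCg hκ hf hfS hgS hSf (le_of_max_le_left hP)
    (le_of_max_le_right hP) hy using 1
  field_simp

def subVLBase (b c : ℝ) (q : ℝ × ℝ) : ℝ := (3 * b - q.1) / (2 * b) - min (c * q.2) 1

theorem subVLBase_pos {b c : ℝ} (hb : 0 < b) {q : ℝ × ℝ} (hq : q.1 < b) :
    0 < subVLBase b c q := by
  have : 1 < (3 * b - q.1) / (2 * b) := by rw [one_lt_div (by positivity)]; linarith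
  have := min_le_right (c * q.2) 1
  unfold subVLBase; linarith

theorem subVL_eq_max {b L c : ℝ} (hb : 0 < b) (hL : 0 ≤ L) (hc : 0 < c) {q : ℝ × ℝ}
    (hq : q ∈ Qset b) : subVL b L c q = max 1 (subVLBase b c q ^ (-L)) := by
  obtain ⟨⟨hx1, hx2⟩, -⟩ := hq
  have h2b : 0 < 2 * b := by positivity
  unfold subVL subVLBase
  split_ifs with ht hx
  · have hct : 1 ≤ c * q.2 := by rwa [div_le_iff₀ hc, mul_comm] at ht
    have hz : (3 * b - q.1) / (2 * b) - min (c * q.2) 1 = (b - q.1) / (2 * b) := by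
      rw [min_eq_right hct]; field_simp; ring
    rw [hz, max_eq_right (Real.one_le_rpow_of_pos_of_le_one_of_nonpos (by positivity)
      (by rw [div_le_one h2b]; linarith) (by linarith))]
  all_goals
    have hct : c * q.2 < 1 := by rwa [not_le, lt_div_iff₀ hc, mul_comm] at ht
    have hz : 2 * b * ((3 * b - q.1) / (2 * b) - c * q.2) = 3 * b - q.1 - 2 * b * c * q.2 := by
      field_simp
    rw [min_eq_left hct.le]
  · rw [max_eq_right (Real.one_le_rpow_of_pos_of_le_one_of_nonpos (by nlinarith) (by nlinarith)
      (by linarith))]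
  · rw [max_eq_left (Real.rpow_le_one_of_one_le_of_nonpos (by nlinarith) (by linarith))]

theorem pT_mk (φ : ℝ × ℝ → ℝ) (x t : ℝ) : pT φ (x, t) = deriv (fun t => φ (x, t)) t := rfl

theorem pX_mk (φ : ℝ × ℝ → ℝ) (x t : ℝ) : pX φ (x, t) = deriv (fun x => φ (x, t)) x := rfl

theorem pXX_mk (φ : ℝ × ℝ → ℝ) (x t : ℝ) :
    pXX φ (x, t) = deriv (deriv fun x => φ (x, t)) x := rfl

theorem IsLocalMin.pT_eq_zero_and_pX_eq_zero_and_pXX_nonneg {φ : ℝ × ℝ → ℝ} {p : ℝ × ℝ}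
    (hmin : IsLocalMin φ p) (hφ : ContDiffAt ℝ 2 φ p) :
    pT φ p = 0 ∧ pX φ p = 0 ∧ 0 ≤ pXX φ p := by
  obtain ⟨x₀, t₀⟩ := p
  have hxslice : IsLocalMax (fun x => 0 - φ (x, t₀)) x₀ := by
    simpa using (hmin.comp_continuous (g := fun x => (x, t₀)) (by fun_prop)).neg
  obtain ⟨hX, hXX⟩ := hxslice.deriv_eq_and_deriv_deriv_le contDiffAt_const
    (hφ.comp x₀ (contDiffAt_id.prodMk contDiffAt_const))
  rw [pT_mk, pX_mk, pXX_mk]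
  refine ⟨(hmin.comp_continuous (g := fun t => (x₀, t)) (by fun_prop)).deriv_eq_zero, ?_, ?_⟩
  · simpa using hX
  · simpa using hXX

theorem IsLocalMax.pX_eq_and_le_pXX_of_subVLBase {b L c x₀ t₀ : ℝ} {φ : ℝ × ℝ → ℝ}
    (h : IsLocalMax (fun q => subVLBase b c q ^ (-L) - φ q) (x₀, t₀)) (hb : 0 < b) (hx : x₀ < b)
    (hφ : ContDiffAt ℝ 2 φ (x₀, t₀)) :
    pX φ (x₀, t₀) = L / (2 * b) * subVLBase b c (x₀, t₀) ^ (-L - 1) ∧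
      L * (L + 1) / (4 * b ^ 2) * subVLBase b c (x₀, t₀) ^ (-L - 2) ≤ pXX φ (x₀, t₀) := by
  have hbase : ∀ x, subVLBase b c (x, t₀) = subVLBase b c (0, t₀) + -1 / (2 * b) * x := by
    intro x; simp only [subVLBase]; ring
  generalize subVLBase b c (0, t₀) = a at hbase
  have hpos := subVLBase_pos (c := c) (q := (x₀, t₀)) hb hx
  rw [hbase] at hpos ⊢
  have hslice : IsLocalMax (fun x => subVLBase b c (x, t₀) ^ (-L) - φ (x, t₀)) x₀ :=
    h.comp_continuous (g := fun x => (x, t₀)) (by fun_prop)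
  simp only [hbase] at hslice
  obtain ⟨hX, hXX⟩ := hslice.deriv_eq_and_deriv_deriv_le (contDiffAt_affine_rpow hpos)
    (hφ.comp x₀ (contDiffAt_id.prodMk contDiffAt_const))
  rw [pX_mk, pXX_mk, hX, (hasDerivAt_affine_rpow hpos).deriv]
  rw [deriv_deriv_affine_rpow hpos] at hXX
  constructor
  · ring
  · convert hXX using 1; field_simp; ring

theorem IsLocalMax.pT_le_of_subVLBase {b L c x₀ t₀ : ℝ} {φ : ℝ × ℝ → ℝ}
    (h : IsLocalMax (fun q => subVLBase b c q ^ (-L) - φ q) (x₀, t₀)) (hb : 0 < b) (hL : 0 ≤ L)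
    (hc : 0 ≤ c) (hx : x₀ < b) (hφ : DifferentiableAt ℝ (fun t => φ (x₀, t)) t₀) :
    pT φ (x₀, t₀) ≤ L * c * subVLBase b c (x₀, t₀) ^ (-L - 1) := by
  set z₀ := subVLBase b c (x₀, t₀)
  have hz₀ : 0 < z₀ + c * t₀ + -c * t₀ := by simpa using subVLBase_pos (c := c) hb hx
  -- `t ↦ min (c * t) 1` grows at most at rate `c`
  have hle : ∀ t ≤ t₀, subVLBase b c (x₀, t) ≤ z₀ + c * t₀ + -c * t := by
    intro t ht
    have : c * t ≤ c * t₀ := mul_le_mul_of_nonneg_left ht hc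
    simp only [z₀, subVLBase, min_def]
    split_ifs <;> linarith
  have hslice : IsLocalMax (fun t => subVLBase b c (x₀, t) ^ (-L) - φ (x₀, t)) t₀ :=
    h.comp_continuous (g := fun t => (x₀, t)) (by fun_prop)
  have hmaxOn : IsLocalMaxOn (fun t => (z₀ + c * t₀ + -c * t) ^ (-L) - φ (x₀, t)) (Iic t₀) t₀ :=
    (hslice.on (Iic t₀)).sub_of_le_of_eq
      (eventually_nhdsWithin_of_forall fun t ht => Real.rpow_le_rpow_of_nonpos
        (subVLBase_pos hb hx) (hle t ht) (by linarith))
      (by simp [z₀])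
  have := hmaxOn.deriv_le_of_Iic (hasDerivAt_affine_rpow hz₀) hφ
  rw [pT_mk]
  convert this using 1
  simp only [z₀]; ring_nf

theorem subVL_pT_le_of_isLocalMaxOn {b L c : ℝ} {f g : ℝ → ℝ} (hb : 0 < b) (hL : 0 ≤ L)
    (hc : 0 < c) (hf : Monotone f) (hf0 : f 0 = 0) (hg : ∀ s, 0 ≤ g s)
    (hprofile : ∀ z ∈ Ioc (0 : ℝ) 1, L * c * z ^ (-L - 1) ≤
      f (1 / 2 * g (L / (2 * b) * z ^ (-L - 1)) * (L * (L + 1) / (4 * b ^ 2) * z ^ (-L - 2))))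
    {φ : ℝ × ℝ → ℝ} {p : ℝ × ℝ} (hp : p ∈ Qset b) (hφ : ContDiffAt ℝ 2 φ p)
    (hmax : IsLocalMaxOn (fun q => subVL b L c q - φ q) (Qset b) p) :
    pT φ p ≤ f (1 / 2 * g (pX φ p) * pXX φ p) := by
  have hQ : Qset b ∈ 𝓝 p := (isOpen_Ioo.prod isOpen_Ioi).mem_nhds hp
  have hv : ∀ᶠ q in 𝓝 p, subVL b L c q = max 1 (subVLBase b c q ^ (-L)) :=
    mem_of_superset hQ fun q hq => subVL_eq_max hb hL hc hq
  obtain ⟨x₀, t₀⟩ := p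
  have hx : x₀ < b := hp.1.2
  rcases le_total (subVLBase b c (x₀, t₀)) 1 with hz | hz
  · have hW : IsLocalMax (fun q => subVLBase b c q ^ (-L) - φ q) (x₀, t₀) :=
      (hmax.isLocalMax hQ).sub_of_le_of_eq (hv.mono fun q hq => hq ▸ le_max_right _ _)
        (by rw [hv.self_of_nhds, max_eq_right (Real.one_le_rpow_of_pos_of_le_one_of_nonpos
          (subVLBase_pos hb hx) hz (by linarith))])
    obtain ⟨hX, hXX⟩ := hW.pX_eq_and_le_pXX_of_subVLBase hb hx hφ
    rw [hX]
    calc pT φ (x₀, t₀) ≤ L * c * subVLBase b c (x₀, t₀) ^ (-L - 1) :=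
          hW.pT_le_of_subVLBase hb hL hc.le hx
            ((hφ.comp t₀ (contDiffAt_const.prodMk contDiffAt_id)).differentiableAt two_ne_zero)
      _ ≤ _ := hprofile _ ⟨subVLBase_pos hb hx, hz⟩
      _ ≤ _ := hf (mul_le_mul_of_nonneg_left hXX (mul_nonneg (by norm_num) (hg _)))
  · have hflat : IsLocalMax (fun q => 1 - φ q) (x₀, t₀) :=
      (hmax.isLocalMax hQ).sub_of_le_of_eq (hv.mono fun q hq => hq ▸ le_max_left _ _)
        (by rw [hv.self_of_nhds, max_eq_left (Real.rpow_le_one_of_one_le_of_nonpos hz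
          (by linarith))])
    have hmin : IsLocalMin φ (x₀, t₀) := by
      filter_upwards [hflat] with q hq
      linarith
    obtain ⟨hT, hX, hXX⟩ := hmin.pT_eq_zero_and_pX_eq_zero_and_pXX_nonneg hφ
    rw [hT, hX]
    calc (0 : ℝ) = f 0 := hf0.symm
      _ ≤ _ := hf (mul_nonneg (mul_nonneg (by norm_num) (hg 0)) hXX)

/-- construction of sub-solutions for `α < 1`, `β ≥ 1/(1-α)`
(Proposition 4.8). -/
theorem subsolution_construction (b α β : ℝ) (f g : ℝ → ℝ)
    (hb : 0 < b) (hα : α < 1) (hβ : 1 / (1 - α) ≤ β)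
    (hf : A1 f) (hf3 : A3 f β) (hg : A2 g α) :
    ∃ L0 : ℝ, 0 < L0 ∧
    ∃ cL : ℝ → ℝ, Tendsto cL atTop atTop ∧
      ∀ L : ℝ, L0 ≤ L →
        0 < cL L ∧
        ∀ φ : ℝ × ℝ → ℝ, ∀ p ∈ Qset b, ContDiffAt ℝ 2 φ p →
          IsLocalMaxOn (fun q => subVL b L (cL L) q - φ q) (Qset b) p →
          pT φ p ≤ f (1 / 2 * g (pX φ p) * pXX φ p) := by
  obtain ⟨-, hfmono, hf0, -, -⟩ := hf
  obtain ⟨Cf, hCf, Sf, hfS⟩ := hf3.exists_mul_rpow_le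
  obtain ⟨Cg, hCg, Sg, hgS⟩ := hg.exists_mul_rpow_le
  have hβ' : 1 ≤ (1 - α) * β := by rwa [div_le_iff₀ (by linarith), mul_comm] at hβ
  have hκ : Tendsto (fun L : ℝ => L / (2 * b)) atTop atTop :=
    tendsto_id.atTop_div_const (by positivity)
  have hκ' : Tendsto (fun L : ℝ => Cg / 2 * (L / (2 * b))) atTop atTop :=
    hκ.const_mul_atTop (by positivity)
  obtain ⟨L₁, hL₁⟩ := eventually_atTop.1
    ((hκ.eventually_ge_atTop (max 1 Sg)).and (hκ'.eventually_ge_atTop Sf))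
  refine ⟨max L₁ 1, by positivity, fun L => Cf * (Cg / 2 * (L / (2 * b))) ^ β / (2 * b),
    (((tendsto_rpow_atTop hf3.1).comp hκ').const_mul_atTop hCf).atTop_div_const (by positivity),
    fun L hL => ?_⟩
  obtain ⟨hSg, hSf⟩ := hL₁ L (le_of_max_le_left hL)
  have hL0 : 0 < L := one_pos.trans_le (le_of_max_le_right hL)
  have hc : 0 < Cf * (Cg / 2 * (L / (2 * b))) ^ β / (2 * b) := by positivity
  refine ⟨hc, fun φ p hp hφ hmax => ?_⟩
  exact subVL_pT_le_of_isLocalMaxOn hb hL0.le hc hfmono.monotone hf0 (fun s => (hg.2.1 s).le)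
    (fun z hz => rpow_profile_classical_subsolution hα.le hβ' hCf hCg hb hL0.le hfmono.monotone
      hfS hgS hSf hSg hz) hp hφ hmax
end
end

section
/- Let b>0 and assume f,g∈C(ℝ) satisfy (A1) and (A2) with exponent α satisfying 1<α≤2. Then there exists a pair (W,c)∈C²((−b,b))×(0,∞) satisfying the traveling-wave profile equation f^{−1}(c) = g(W′(x))W″(x) for all x∈(−b,b) together with lim_{x→b}W′(x)=+∞ and lim_{x→−b}W′(x)=−∞. Moreover, if (W̃,c̃)∈C²((−b,b))×(0,∞) is another such pair, then c̃=c and W̃−W is constant. Furthermore, W satisfies lim_{x→±b}W(x)=∞, and there exist constants D₊,D₋>0 such that lim_{x→b} W(x)/ψ_{(2−α)/(α−1)}(b−x) = D₊ and lim_{x→−b} W(x)/ψ_{(2−α)/(α−1)}(b+x) = D₋, where ψ_γ(s):=s^{−γ} for γ>0 and ψ₀(s):=−log s. -/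
/-!
Writing `G` for a primitive of `g`, the profile equation says `(G ∘ W')' = f⁻¹(c)`, so `G ∘ W'`
is affine. Since `α > 1`, `g` is integrable, and the boundary behaviour `W' → ±∞` pins the affine
function down: `∫_{-∞}^{W'(x)} g = a (x + b)` with `a = f⁻¹(c) = (∫ g) / (2b)`. This determines
`c` and `W'`, hence `W` up to a constant, and inverting the distribution function of `g`
produces them.

Near `x = b` the same identity reads `∫_{W'(x)}^∞ g = a (b - x)`, while the tail integral
`∫_v^∞ g` is asymptotic to `C_{g+} v^{1-α} / (α - 1)`; hence `W'(x) ~ K (b - x)^{-1/(α-1)}`, and integrating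
this (an `∞/∞` l'Hôpital rule) gives the `ψ_{(2-α)/(α-1)}` asymptotics. The left end follows by
the reflection `x ↦ -x`, `g ↦ g(-·)`.
-/

open Filter Set Topology

noncomputable section

open MeasureTheory

theorem HasDerivAt.lhopital_atTop_nhdsLT_zero {f f' g g' : ℝ → ℝ} {q : ℝ}
    (hff' : ∀ᶠ x in 𝓝[<] q, HasDerivAt f (f' x) x)
    (hgg' : ∀ᶠ x in 𝓝[<] q, HasDerivAt g (g' x) x) (hg' : ∀ᶠ x in 𝓝[<] q, 0 < g' x)
    (hg : Tendsto g (𝓝[<] q) atTop) (hdiv : Tendsto (fun x => f' x / g' x) (𝓝[<] q) (𝓝 0)) :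
    Tendsto (fun x => f x / g x) (𝓝[<] q) (𝓝 0) := by
  rw [Metric.tendsto_nhds]
  intro ε hε
  have hsmall : ∀ᶠ x in 𝓝[<] q, |f' x| ≤ ε / 2 * g' x := by
    filter_upwards [hdiv.eventually (Metric.closedBall_mem_nhds 0 (half_pos hε)), hg']
      with x hx hgx
    rwa [dist_zero_right, norm_div, Real.norm_eq_abs, Real.norm_eq_abs,
      abs_of_pos hgx, div_le_iff₀ hgx] at hx
  obtain ⟨x₀, hx₀, hsub⟩ :=
    mem_nhdsLT_iff_exists_Ioo_subset.1 (hff'.and (hgg'.and (hg'.and hsmall)))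
  obtain ⟨x₁, hx₀₁, hx₁q⟩ := exists_between (show x₀ < q from hx₀)
  have hbound : ∀ x ∈ Ico x₁ q, |f x| ≤ |f x₁| + ε / 2 * (g x - g x₁) := by
    intro x hx
    have hI : Icc x₁ x ⊆ Ioo x₀ q := fun y hy => ⟨hx₀₁.trans_le hy.1, hy.2.trans_lt hx.2⟩
    have hdf : ∀ y ∈ Icc x₁ x, HasDerivAt f (f' y) y := fun y hy => (hsub (hI hy)).1
    have hdB : ∀ y ∈ Icc x₁ x,
        HasDerivAt (fun y => |f x₁| + ε / 2 * (g y - g x₁)) (ε / 2 * g' y) y := fun y hy =>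
      ((((hsub (hI hy)).2.1).sub_const (g x₁)).const_mul (ε / 2)).const_add |f x₁|
    exact image_norm_le_of_norm_deriv_right_le_deriv_boundary'
      (fun y hy => (hdf y hy).continuousAt.continuousWithinAt)
      (fun y hy => (hdf y (Ico_subset_Icc_self hy)).hasDerivWithinAt) (by simp)
      (fun y hy => (hdB y hy).continuousAt.continuousWithinAt)
      (fun y hy => (hdB y (Ico_subset_Icc_self hy)).hasDerivWithinAt)
      (fun y hy => (hsub (hI (Ico_subset_Icc_self hy))).2.2.2) ⟨hx.1, le_rfl⟩
  filter_upwards [Ioo_mem_nhdsLT hx₁q, hg.eventually_gt_atTop 0,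
    hg.eventually_gt_atTop ((|f x₁| - ε / 2 * g x₁) / (ε / 2))] with x hx hgx hgx'
  rw [dist_zero_right, norm_div, Real.norm_eq_abs, Real.norm_eq_abs, abs_of_pos hgx,
    div_lt_iff₀ hgx]
  rw [div_lt_iff₀ (half_pos hε)] at hgx'
  linarith [hbound x ⟨hx.1.le, hx.2⟩]

theorem HasDerivAt.lhopital_atTop_nhdsLT {f f' g g' : ℝ → ℝ} {q L : ℝ}
    (hff' : ∀ᶠ x in 𝓝[<] q, HasDerivAt f (f' x) x)
    (hgg' : ∀ᶠ x in 𝓝[<] q, HasDerivAt g (g' x) x) (hg' : ∀ᶠ x in 𝓝[<] q, 0 < g' x)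
    (hg : Tendsto g (𝓝[<] q) atTop) (hdiv : Tendsto (fun x => f' x / g' x) (𝓝[<] q) (𝓝 L)) :
    Tendsto (fun x => f x / g x) (𝓝[<] q) (𝓝 L) := by
  have hdiv₀ : Tendsto (fun x => (f' x - L * g' x) / g' x) (𝓝[<] q) (𝓝 0) := by
    refine (sub_self L ▸ hdiv.sub_const L).congr' ?_
    filter_upwards [hg'] with x hx
    field_simp
  have hshift := HasDerivAt.lhopital_atTop_nhdsLT_zero (f := fun x => f x - L * g x)
    ((hff'.and hgg').mono fun x hx => hx.1.sub (hx.2.const_mul L)) hgg' hg' hg hdiv₀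
  refine (zero_add L ▸ hshift.add_const L).congr' ?_
  filter_upwards [hg.eventually_gt_atTop 0] with x hx
  field_simp
  ring

section Inverse

variable {φ : ℝ → ℝ} {l L y : ℝ}

lemma StrictMono.mem_Ioo_of_tendsto (hφ : StrictMono φ) (hl : Tendsto φ atBot (𝓝 l))
    (hL : Tendsto φ atTop (𝓝 L)) (u : ℝ) : φ u ∈ Ioo l L :=
  ⟨(hφ.monotone.le_of_tendsto hl (u - 1)).trans_lt (hφ (sub_one_lt u)),
    (hφ (lt_add_one u)).trans_le (hφ.monotone.ge_of_tendsto hL (u + 1))⟩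

lemma Continuous.apply_invFun_of_mem_Ioo (hc : Continuous φ) (hl : Tendsto φ atBot (𝓝 l))
    (hL : Tendsto φ atTop (𝓝 L)) (hy : y ∈ Ioo l L) : φ (Function.invFun φ y) = y :=
  Function.invFun_eq <| mem_range_of_exists_le_of_exists_ge hc
    ((hl.eventually (eventually_lt_nhds hy.1)).exists.imp fun _ => le_of_lt)
    ((hL.eventually (eventually_gt_nhds hy.2)).exists.imp fun _ => le_of_lt)

lemma StrictMono.continuousAt_invFun (hφ : StrictMono φ) (hc : Continuous φ)
    (hl : Tendsto φ atBot (𝓝 l)) (hL : Tendsto φ atTop (𝓝 L)) (hy : y ∈ Ioo l L) :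
    ContinuousAt (Function.invFun φ) y := by
  have hinv := fun z (hz : z ∈ Ioo l L) => hc.apply_invFun_of_mem_Ioo hl hL hz
  have himage : Function.invFun φ '' Ioo l L = univ := eq_univ_of_forall fun u =>
    ⟨φ u, hφ.mem_Ioo_of_tendsto hl hL u, Function.leftInverse_invFun hφ.injective u⟩
  refine continuousAt_of_monotoneOn_of_image_mem_nhds (fun z hz w hw hzw => ?_)
    (Ioo_mem_nhds hy.1 hy.2) (himage ▸ univ_mem)
  rwa [← hφ.le_iff_le, hinv z hz, hinv w hw]

lemma StrictMono.tendsto_invFun_nhdsLT (hφ : StrictMono φ) (hc : Continuous φ)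
    (hl : Tendsto φ atBot (𝓝 l)) (hL : Tendsto φ atTop (𝓝 L)) :
    Tendsto (Function.invFun φ) (𝓝[<] L) atTop := by
  refine Filter.tendsto_atTop.2 fun M => ?_
  have hM := hφ.mem_Ioo_of_tendsto hl hL M
  filter_upwards [Ioo_mem_nhdsLT hM.2] with y hy
  rw [← hφ.le_iff_le, hc.apply_invFun_of_mem_Ioo hl hL ⟨hM.1.trans hy.1, hy.2⟩]
  exact hy.1.le

lemma StrictMono.tendsto_invFun_nhdsGT (hφ : StrictMono φ) (hc : Continuous φ)
    (hl : Tendsto φ atBot (𝓝 l)) (hL : Tendsto φ atTop (𝓝 L)) :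
    Tendsto (Function.invFun φ) (𝓝[>] l) atBot := by
  refine Filter.tendsto_atBot.2 fun M => ?_
  have hM := hφ.mem_Ioo_of_tendsto hl hL M
  filter_upwards [Ioo_mem_nhdsGT hM.1] with y hy
  rw [← hφ.le_iff_le, hc.apply_invFun_of_mem_Ioo hl hL ⟨hy.1, hy.2.trans hM.2⟩]
  exact hy.2.le

end Inverse

lemma hasDerivAt_intervalIntegral_of_continuousOn_Ioo {v : ℝ → ℝ} {p q c x : ℝ}
    (hv : ContinuousOn v (Ioo p q)) (hc : c ∈ Ioo p q) (hx : x ∈ Ioo p q) :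
    HasDerivAt (fun x => ∫ t in c..x, v t) (v x) x :=
  intervalIntegral.integral_hasDerivAt_right
    (hv.mono (ordConnected_Ioo.uIcc_subset hc hx)).intervalIntegrable
    (hv.stronglyMeasurableAtFilter isOpen_Ioo x hx) (hv.continuousAt (Ioo_mem_nhds hx.1 hx.2))

lemma contDiffOn_two_of_hasDerivAt {s : Set ℝ} {W v v' : ℝ → ℝ} (hs : IsOpen s)
    (hW : ∀ x ∈ s, HasDerivAt W (v x) x) (hv : ∀ x ∈ s, HasDerivAt v (v' x) x)
    (hv' : ContinuousOn v' s) : ContDiffOn ℝ 2 W s := by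
  have h1 : ContDiffOn ℝ 1 v s := by
    rw [show (1 : WithTop ℕ∞) = 0 + 1 from rfl, contDiffOn_succ_iff_deriv_of_isOpen hs]
    exact ⟨fun x hx => (hv x hx).differentiableAt.differentiableWithinAt, by simp,
      contDiffOn_zero.2 (hv'.congr fun x hx => (hv x hx).deriv)⟩
  rw [show (2 : WithTop ℕ∞) = 1 + 1 from rfl, contDiffOn_succ_iff_deriv_of_isOpen hs]
  exact ⟨fun x hx => (hW x hx).differentiableAt.differentiableWithinAt, by simp,
    h1.congr fun x hx => (hW x hx).deriv⟩

section Cumulative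

variable {g : ℝ → ℝ}

lemma hasDerivAt_integral_Iic (hgc : Continuous g) (hgi : ∀ u, IntegrableOn g (Iic u)) (u : ℝ) :
    HasDerivAt (fun u => ∫ s in Iic u, g s) (g u) u := by
  have h : (fun u => ∫ s in Iic u, g s) = fun u => (∫ s in Iic 0, g s) + ∫ s in (0)..u, g s := by
    funext u
    rw [← intervalIntegral.integral_Iic_sub_Iic (hgi 0) (hgi u)]
    ring
  rw [h]
  exact (hgc.integral_hasStrictDerivAt 0 u).hasDerivAt.const_add _

lemma strictMono_integral_Iic (hgc : Continuous g) (hgpos : ∀ s, 0 < g s)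
    (hgi : ∀ u, IntegrableOn g (Iic u)) : StrictMono fun u => ∫ s in Iic u, g s := by
  intro u w huw
  rw [← sub_pos, intervalIntegral.integral_Iic_sub_Iic (hgi u) (hgi w)]
  exact intervalIntegral.intervalIntegral_pos_of_pos (hgc.intervalIntegrable u w) hgpos huw

lemma tendsto_integral_Iic_atTop (hgi : Integrable g) :
    Tendsto (fun u => ∫ s in Iic u, g s) atTop (𝓝 (∫ s, g s)) := by
  have h := (tendsto_integral_Ioi_zero (μ := volume) (f := g) tendsto_id).const_sub (∫ s, g s)
  rw [sub_zero] at h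
  refine h.congr fun u => ?_
  rw [id, ← intervalIntegral.integral_Iic_add_Ioi hgi.integrableOn hgi.integrableOn]
  ring

end Cumulative

section Tail

variable {g : ℝ → ℝ} {α C : ℝ}

lemma integrableOn_Ioi_of_tendsto_abs_rpow_mul (hα : 1 < α) (hgc : Continuous g)
    (hlim : Tendsto (fun s => |s| ^ α * g s) atTop (𝓝 C)) (a : ℝ) : IntegrableOn g (Ioi a) := by
  have hO : g =O[atTop] fun s : ℝ => s ^ (-α) := by
    refine ((hlim.isBigO_one ℝ).mul (Asymptotics.isBigO_refl (fun s : ℝ => s ^ (-α)) atTop)).congr'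
      ?_ (by simp)
    filter_upwards [eventually_gt_atTop 0] with s hs
    rw [abs_of_pos hs, Real.rpow_neg hs.le]
    field_simp [(Real.rpow_pos_of_pos hs α).ne']
  exact ((hgc.locallyIntegrable.locallyIntegrableOn _).integrableOn_of_isBigO_atTop hO
    (integrableAtFilter_rpow_atTop_iff.2 (by linarith))).mono_set Ioi_subset_Ici_self

lemma tendsto_abs_rpow_mul_comp_neg (hlim : Tendsto (fun s => |s| ^ α * g s) atBot (𝓝 C)) :
    Tendsto (fun s => |s| ^ α * g (-s)) atTop (𝓝 C) := by
  simpa [Function.comp_def] using hlim.comp tendsto_neg_atTop_atBot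

lemma integrable_of_tendsto_abs_rpow_mul {C' : ℝ} (hα : 1 < α) (hgc : Continuous g)
    (htop : Tendsto (fun s => |s| ^ α * g s) atTop (𝓝 C))
    (hbot : Tendsto (fun s => |s| ^ α * g s) atBot (𝓝 C')) : Integrable g := by
  rw [← integrableOn_univ, ← Iic_union_Ioi (a := 0), integrableOn_union]
  refine ⟨Iff.mpr integrableOn_Iic_iff_integrableOn_Iio ?_,
    integrableOn_Ioi_of_tendsto_abs_rpow_mul hα hgc htop 0⟩
  simpa using (integrableOn_Ioi_of_tendsto_abs_rpow_mul hα (hgc.comp continuous_neg)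
    (tendsto_abs_rpow_mul_comp_neg hbot) 0).comp_neg

lemma hasDerivAt_integral_Ioi (hgc : Continuous g) (hgi : ∀ a, IntegrableOn g (Ioi a)) (v : ℝ) :
    HasDerivAt (fun u => ∫ s in Ioi u, g s) (-g v) v := by
  have h : (fun u => ∫ s in Ioi u, g s) = fun u => (∫ s in Ioi 0, g s) - ∫ s in (0)..u, g s := by
    funext u
    rw [← intervalIntegral.integral_interval_add_Ioi (hgi 0) (hgi u)]
    ring
  rw [h]
  exact (hgc.integral_hasStrictDerivAt 0 v).hasDerivAt.const_sub _

theorem tendsto_rpow_mul_integral_Ioi (hα : 1 < α) (hgc : Continuous g)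
    (hlim : Tendsto (fun s => |s| ^ α * g s) atTop (𝓝 C)) :
    Tendsto (fun v => v ^ (α - 1) * ∫ s in Ioi v, g s) atTop (𝓝 (C / (α - 1))) := by
  have hratio : Tendsto (fun v => -g v / ((1 - α) * v ^ (1 - α - 1))) atTop
      (𝓝 (C / (α - 1))) := by
    refine (hlim.div_const (α - 1)).congr' ?_
    filter_upwards [eventually_gt_atTop 0] with v hv
    rw [abs_of_pos hv, show 1 - α - 1 = -α by ring, Real.rpow_neg hv.le]
    have : α - 1 ≠ 0 := by linarith
    have : 1 - α ≠ 0 := by linarith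
    field_simp [(Real.rpow_pos_of_pos hv α).ne']
    ring
  refine (HasDerivAt.lhopital_zero_atTop
    (Eventually.of_forall
      (hasDerivAt_integral_Ioi hgc (integrableOn_Ioi_of_tendsto_abs_rpow_mul hα hgc hlim)))
    ((eventually_gt_atTop 0).mono fun v hv => Real.hasDerivAt_rpow_const (Or.inl hv.ne'))
    ((eventually_gt_atTop 0).mono fun v hv =>
      mul_ne_zero (by linarith) (Real.rpow_pos_of_pos hv _).ne')
    (tendsto_integral_Ioi_zero tendsto_id)
    (by simpa using tendsto_rpow_neg_atTop (sub_pos.2 hα)) hratio).congr' ?_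
  filter_upwards [eventually_gt_atTop 0] with v hv
  rw [show 1 - α = -(α - 1) by ring, Real.rpow_neg hv.le, div_inv_eq_mul, mul_comm]

end Tail

lemma tendsto_psi_nhdsGT_zero (γ : ℝ) : Tendsto (psi γ) (𝓝[>] 0) atTop := by
  unfold psi
  split_ifs with hγ
  · exact tendsto_rpow_neg_nhdsGT_zero (neg_neg_of_pos hγ)
  · exact tendsto_neg_atBot_atTop.comp Real.tendsto_log_nhdsGT_zero

lemma exists_pos_hasDerivAt_psi {γ : ℝ} (hγ : 0 ≤ γ) :
    ∃ κ > 0, ∀ s > 0, HasDerivAt (psi γ) (-(κ * s ^ (-(γ + 1)))) s := by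
  rcases hγ.lt_or_eq with hγ | rfl
  · refine ⟨γ, hγ, fun s hs => ?_⟩
    rw [show psi γ = fun t => t ^ (-γ) from funext fun t => if_pos hγ]
    exact (Real.hasDerivAt_rpow_const (Or.inl hs.ne')).congr_deriv (by ring_nf)
  · refine ⟨1, one_pos, fun s hs => ?_⟩
    rw [show psi 0 = -Real.log from funext fun t => if_neg (lt_irrefl 0)]
    exact (Real.hasDerivAt_log hs.ne').neg.congr_deriv (by norm_num [Real.rpow_neg_one])

def SolvesProfileEq (g : ℝ → ℝ) (a p q : ℝ) (W : ℝ → ℝ) : Prop :=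
  ContDiffOn ℝ 2 W (Ioo p q) ∧ ∀ x ∈ Ioo p q, a = g (deriv W x) * deriv (deriv W) x

namespace SolvesProfileEq

variable {g W : ℝ → ℝ} {a p q x y : ℝ}

lemma hasDerivAt (h : SolvesProfileEq g a p q W) (hx : x ∈ Ioo p q) :
    HasDerivAt W (deriv W x) x :=
  ((h.1.differentiableOn (by norm_num)).differentiableAt (Ioo_mem_nhds hx.1 hx.2)).hasDerivAt

lemma hasDerivAt_deriv (h : SolvesProfileEq g a p q W) (hx : x ∈ Ioo p q) :
    HasDerivAt (deriv W) (deriv (deriv W) x) x :=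
  (((h.1.deriv_of_isOpen isOpen_Ioo (m := 1) (by norm_num)).differentiableOn
    one_ne_zero).differentiableAt (Ioo_mem_nhds hx.1 hx.2)).hasDerivAt

lemma comp_neg (h : SolvesProfileEq g a p q W) :
    SolvesProfileEq (fun s => g (-s)) a (-q) (-p) (fun x => W (-x)) := by
  have hmaps : ∀ x ∈ Ioo (-q) (-p), -x ∈ Ioo p q := fun x hx =>
    ⟨lt_neg_of_lt_neg hx.2, neg_lt_of_neg_lt hx.1⟩
  have hderiv : deriv (fun x => W (-x)) = fun x => -deriv W (-x) :=
    funext fun x => deriv_comp_neg W x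
  refine ⟨h.1.comp contDiff_neg.contDiffOn hmaps, fun x hx => ?_⟩
  rw [hderiv, deriv.fun_neg, deriv_comp_neg, neg_neg]
  simpa using h.2 (-x) (hmaps x hx)

lemma intervalIntegral_eq (h : SolvesProfileEq g a p q W) (hgc : Continuous g)
    (hx : x ∈ Ioo p q) (hy : y ∈ Ioo p q) :
    ∫ s in deriv W x..deriv W y, g s = a * (y - x) := by
  set F : ℝ → ℝ := fun z => (∫ s in deriv W x..deriv W z, g s) - a * (z - x)
  have hF : ∀ z ∈ Ioo p q, HasDerivAt F 0 z := by
    intro z hz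
    exact (((hgc.integral_hasStrictDerivAt (deriv W x) (deriv W z)).hasDerivAt.comp z
      (h.hasDerivAt_deriv hz)).sub (((hasDerivAt_id z).sub_const x).const_mul a)).congr_deriv
      (by rw [← h.2 z hz]; ring)
  have := isOpen_Ioo.is_const_of_deriv_eq_zero isPreconnected_Ioo
    (fun z hz => (hF z hz).differentiableAt.differentiableWithinAt) (fun z hz => (hF z hz).deriv)
    hy hx
  simpa [F, sub_eq_zero] using this

lemma integral_Ioi_eq (h : SolvesProfileEq g a p q W) (hgc : Continuous g)
    (hgi : ∀ u, IntegrableOn g (Ioi u)) (hq : Tendsto (deriv W) (𝓝[<] q) atTop)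
    (hx : x ∈ Ioo p q) : ∫ s in Ioi (deriv W x), g s = a * (q - x) := by
  refine tendsto_nhds_unique (intervalIntegral_tendsto_integral_Ioi _ (hgi _) hq) ?_
  refine (((continuous_const.mul (continuous_id.sub continuous_const)).tendsto q).mono_left
    nhdsWithin_le_nhds).congr' ?_
  filter_upwards [Ioo_mem_nhdsLT hx.2] with y hy
  exact (h.intervalIntegral_eq hgc hx ⟨hx.1.trans hy.1, hy.2⟩).symm

lemma integral_Iic_eq (h : SolvesProfileEq g a p q W) (hgc : Continuous g)
    (hgi : ∀ u, IntegrableOn g (Iic u)) (hp : Tendsto (deriv W) (𝓝[>] p) atBot)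
    (hx : x ∈ Ioo p q) : ∫ s in Iic (deriv W x), g s = a * (x - p) := by
  refine tendsto_nhds_unique (intervalIntegral_tendsto_integral_Iic _ (hgi _) hp) ?_
  refine (((continuous_const.mul (continuous_const.sub continuous_id)).tendsto p).mono_left
    nhdsWithin_le_nhds).congr' ?_
  filter_upwards [Ioo_mem_nhdsGT hx.1] with y hy
  exact (h.intervalIntegral_eq hgc ⟨hy.1, hy.2.trans hx.2⟩ hx).symm

end SolvesProfileEq

section Profile

variable {g : ℝ → ℝ} {p q : ℝ}

theorem exists_profile_slope (hgc : Continuous g) (hgpos : ∀ s, 0 < g s) (hgi : Integrable g)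
    (hpq : p < q) :
    ∃ a > 0, ∃ v : ℝ → ℝ, (∀ x ∈ Ioo p q, HasDerivAt v ((g (v x))⁻¹ * a) x) ∧
      Tendsto v (𝓝[<] q) atTop ∧ Tendsto v (𝓝[>] p) atBot := by
  set Φ : ℝ → ℝ := fun u => ∫ s in Iic u, g s
  have hΦd : ∀ u, HasDerivAt Φ (g u) u := hasDerivAt_integral_Iic hgc fun _ => hgi.integrableOn
  have hΦ : StrictMono Φ := strictMono_integral_Iic hgc hgpos fun _ => hgi.integrableOn
  have hΦc : Continuous Φ := continuous_iff_continuousAt.2 fun u => (hΦd u).continuousAt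
  have hΦbot : Tendsto Φ atBot (𝓝 0) := tendsto_integral_Iic_zero tendsto_id
  have hΦtop : Tendsto Φ atTop (𝓝 (∫ s, g s)) := tendsto_integral_Iic_atTop hgi
  have hM := hΦ.mem_Ioo_of_tendsto hΦbot hΦtop 0
  set a := (∫ s, g s) / (q - p)
  have ha : 0 < a := div_pos (hM.1.trans hM.2) (sub_pos.2 hpq)
  have haq : a * (q - p) = ∫ s, g s := div_mul_cancel₀ _ (sub_pos.2 hpq).ne'
  set ℓ : ℝ → ℝ := fun x => a * (x - p)
  have hℓd : ∀ x, HasDerivAt ℓ a x := fun x =>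
    (((hasDerivAt_id x).sub_const p).const_mul a).congr_deriv (mul_one a)
  have hℓ : ∀ x ∈ Ioo p q, ℓ x ∈ Ioo 0 (∫ s, g s) := fun x hx =>
    ⟨mul_pos ha (sub_pos.2 hx.1), haq ▸ mul_lt_mul_of_pos_left (sub_lt_sub_right hx.2 p) ha⟩
  refine ⟨a, ha, fun x => Function.invFun Φ (ℓ x), fun x hx => ?_,
    (hΦ.tendsto_invFun_nhdsLT hΦc hΦbot hΦtop).comp ?_,
    (hΦ.tendsto_invFun_nhdsGT hΦc hΦbot hΦtop).comp ?_⟩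
  · exact (HasDerivAt.of_local_left_inverse (hΦ.continuousAt_invFun hΦc hΦbot hΦtop (hℓ x hx))
      (hΦd _) (hgpos _).ne' (eventually_of_mem (Ioo_mem_nhds (hℓ x hx).1 (hℓ x hx).2)
        fun z hz => hΦc.apply_invFun_of_mem_Ioo hΦbot hΦtop hz)).comp x (hℓd x)
  · refine tendsto_nhdsWithin_of_tendsto_nhds_of_eventually_within ℓ ?_ ?_
    · rw [← haq]
      exact (hℓd q).continuousAt.mono_left nhdsWithin_le_nhds
    · filter_upwards [Ioo_mem_nhdsLT hpq] with x hx using (hℓ x hx).2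
  · refine tendsto_nhdsWithin_of_tendsto_nhds_of_eventually_within ℓ ?_ ?_
    · simpa [ℓ] using (hℓd p).continuousAt.mono_left (nhdsWithin_le_nhds (s := Ioi p))
    · filter_upwards [Ioo_mem_nhdsGT hpq] with x hx using (hℓ x hx).1

theorem exists_solvesProfileEq (hgc : Continuous g) (hgpos : ∀ s, 0 < g s) (hgi : Integrable g)
    (hpq : p < q) :
    ∃ a > 0, ∃ W, SolvesProfileEq g a p q W ∧ Tendsto (deriv W) (𝓝[<] q) atTop ∧
      Tendsto (deriv W) (𝓝[>] p) atBot := by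
  obtain ⟨a, ha, v, hv, hvq, hvp⟩ := exists_profile_slope hgc hgpos hgi hpq
  have hvc : ContinuousOn v (Ioo p q) := fun x hx => (hv x hx).continuousAt.continuousWithinAt
  have hmid : (p + q) / 2 ∈ Ioo p q := ⟨by linarith, by linarith⟩
  set W : ℝ → ℝ := fun x => ∫ t in (p + q) / 2..x, v t
  have hW : ∀ x ∈ Ioo p q, HasDerivAt W (v x) x := fun x hx =>
    hasDerivAt_intervalIntegral_of_continuousOn_Ioo hvc hmid hx
  have hWv : ∀ x ∈ Ioo p q, deriv W =ᶠ[𝓝 x] v := fun x hx =>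
    eventually_of_mem (Ioo_mem_nhds hx.1 hx.2) fun y hy => (hW y hy).deriv
  refine ⟨a, ha, W, ⟨contDiffOn_two_of_hasDerivAt isOpen_Ioo hW hv
    (((hgc.comp_continuousOn hvc).inv₀ fun x _ => (hgpos _).ne').mul continuousOn_const),
    fun x hx => ?_⟩, hvq.congr' ?_, hvp.congr' ?_⟩
  · rw [(hWv x hx).deriv_eq, (hW x hx).deriv, (hv x hx).deriv]
    field_simp [(hgpos (v x)).ne']
  · filter_upwards [Ioo_mem_nhdsLT hpq] with x hx using ((hW x hx).deriv).symm
  · filter_upwards [Ioo_mem_nhdsGT hpq] with x hx using ((hW x hx).deriv).symm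

lemma SolvesProfileEq.mul_sub_eq_integral {a : ℝ} {W : ℝ → ℝ} (h : SolvesProfileEq g a p q W)
    (hgc : Continuous g) (hgi : Integrable g) (hpq : p < q)
    (hq : Tendsto (deriv W) (𝓝[<] q) atTop) (hp : Tendsto (deriv W) (𝓝[>] p) atBot) :
    a * (q - p) = ∫ s, g s := by
  have hmid : (p + q) / 2 ∈ Ioo p q := ⟨by linarith, by linarith⟩
  rw [← intervalIntegral.integral_Iic_add_Ioi (b := deriv W ((p + q) / 2)) hgi.integrableOn
    hgi.integrableOn, h.integral_Iic_eq hgc (fun _ => hgi.integrableOn) hp hmid,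
    h.integral_Ioi_eq hgc (fun _ => hgi.integrableOn) hq hmid]
  ring

theorem SolvesProfileEq.unique {a₁ a₂ : ℝ} {W₁ W₂ : ℝ → ℝ} (h₁ : SolvesProfileEq g a₁ p q W₁)
    (h₂ : SolvesProfileEq g a₂ p q W₂) (hgc : Continuous g) (hgpos : ∀ s, 0 < g s)
    (hgi : Integrable g) (hpq : p < q)
    (hq₁ : Tendsto (deriv W₁) (𝓝[<] q) atTop) (hp₁ : Tendsto (deriv W₁) (𝓝[>] p) atBot)
    (hq₂ : Tendsto (deriv W₂) (𝓝[<] q) atTop) (hp₂ : Tendsto (deriv W₂) (𝓝[>] p) atBot) :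
    a₂ = a₁ ∧ ∃ k, ∀ x ∈ Ioo p q, W₂ x = W₁ x + k := by
  have ha : a₂ = a₁ := mul_right_cancel₀ (sub_pos.2 hpq).ne'
    ((h₂.mul_sub_eq_integral hgc hgi hpq hq₂ hp₂).trans
      (h₁.mul_sub_eq_integral hgc hgi hpq hq₁ hp₁).symm)
  have hderiv : ∀ x ∈ Ioo p q, HasDerivAt (fun x => W₂ x - W₁ x) 0 x := fun x hx => by
    have hW' : deriv W₂ x = deriv W₁ x :=
      (strictMono_integral_Iic hgc hgpos fun _ => hgi.integrableOn).injective <| by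
        rw [h₂.integral_Iic_eq hgc (fun _ => hgi.integrableOn) hp₂ hx,
          h₁.integral_Iic_eq hgc (fun _ => hgi.integrableOn) hp₁ hx, ha]
    exact ((h₂.hasDerivAt hx).sub (h₁.hasDerivAt hx)).congr_deriv (by rw [hW', sub_self])
  obtain ⟨k, hk⟩ := isOpen_Ioo.exists_is_const_of_deriv_eq_zero isPreconnected_Ioo
    (fun x hx => (hderiv x hx).differentiableAt.differentiableWithinAt)
    (fun x hx => (hderiv x hx).deriv)
  exact ⟨ha, k, fun x hx => sub_eq_iff_eq_add'.1 (hk x hx)⟩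

end Profile

section Asymptotics

variable {g W : ℝ → ℝ} {a p q α C : ℝ}

theorem SolvesProfileEq.tendsto_deriv_mul_rpow_nhdsLT (h : SolvesProfileEq g a p q W)
    (ha : a ≠ 0) (hpq : p < q) (hα1 : 1 < α) (hgc : Continuous g)
    (hlim : Tendsto (fun s => |s| ^ α * g s) atTop (𝓝 C))
    (hq : Tendsto (deriv W) (𝓝[<] q) atTop) :
    Tendsto (fun x => deriv W x * (q - x) ^ (α - 1)⁻¹) (𝓝[<] q)
      (𝓝 ((C / (α - 1) / a) ^ (α - 1)⁻¹)) := by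
  have hα : 0 < α - 1 := by linarith
  have hnear : Ioo p q ∈ 𝓝[<] q := Ioo_mem_nhdsLT hpq
  have hrate : Tendsto (fun x => deriv W x ^ (α - 1) * (q - x)) (𝓝[<] q)
      (𝓝 (C / (α - 1) / a)) := by
    refine (((tendsto_rpow_mul_integral_Ioi hα1 hgc hlim).comp hq).div_const a).congr' ?_
    filter_upwards [hnear] with x hx
    rw [Function.comp_apply,
      h.integral_Ioi_eq hgc (integrableOn_Ioi_of_tendsto_abs_rpow_mul hα1 hgc hlim) hq hx]
    field_simp
  refine (hrate.rpow_const (p := (α - 1)⁻¹) (Or.inr (inv_nonneg.2 hα.le))).congr' ?_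
  filter_upwards [hnear, hq.eventually_gt_atTop 0] with x hx hWx
  rw [Real.mul_rpow (Real.rpow_nonneg hWx.le _) (sub_pos.2 hx.2).le, ← Real.rpow_mul hWx.le,
    mul_inv_cancel₀ hα.ne', Real.rpow_one]

theorem SolvesProfileEq.tendsto_div_psi_nhdsLT (h : SolvesProfileEq g a p q W) (ha : 0 < a)
    (hpq : p < q) (hα1 : 1 < α) (hα2 : α ≤ 2) (hgc : Continuous g) (hC : 0 < C)
    (hlim : Tendsto (fun s => |s| ^ α * g s) atTop (𝓝 C))
    (hq : Tendsto (deriv W) (𝓝[<] q) atTop) :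
    ∃ D > 0, Tendsto (fun x => W x / psi ((2 - α) / (α - 1)) (q - x)) (𝓝[<] q) (𝓝 D) ∧
      Tendsto W (𝓝[<] q) atTop := by
  set γ := (2 - α) / (α - 1)
  have hα : 0 < α - 1 := by linarith
  have hγ : 0 ≤ γ := div_nonneg (by linarith) hα.le
  have hγα : γ + 1 = (α - 1)⁻¹ := by simp only [γ]; field_simp; ring
  set K := (C / (α - 1) / a) ^ (α - 1)⁻¹
  have hK : 0 < K := Real.rpow_pos_of_pos (by positivity) _
  obtain ⟨κ, hκ, hψ⟩ := exists_pos_hasDerivAt_psi hγ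
  have hP : ∀ x < q, HasDerivAt (fun x => psi γ (q - x)) (κ * (q - x) ^ (-(γ + 1))) x :=
    fun x hx => ((hψ _ (sub_pos.2 hx)).comp x ((hasDerivAt_id x).const_sub q)).congr_deriv
      (by ring)
  have hPq : Tendsto (fun x => psi γ (q - x)) (𝓝[<] q) atTop := by
    refine (tendsto_psi_nhdsGT_zero γ).comp
      (tendsto_nhdsWithin_of_tendsto_nhds_of_eventually_within _ ?_
        (eventually_mem_nhdsWithin.mono fun x hx => sub_pos.2 (mem_Iio.1 hx)))
    exact ((continuous_const.sub continuous_id).tendsto' q 0 (sub_self q)).mono_left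
      nhdsWithin_le_nhds
  have hD : Tendsto (fun x => W x / psi γ (q - x)) (𝓝[<] q) (𝓝 (K / κ)) := by
    refine HasDerivAt.lhopital_atTop_nhdsLT
      (mem_of_superset (Ioo_mem_nhdsLT hpq) fun x hx => h.hasDerivAt hx)
      (eventually_mem_nhdsWithin.mono hP)
      (eventually_mem_nhdsWithin.mono fun x hx => by
        have := sub_pos.2 (mem_Iio.1 hx)
        positivity) hPq ?_
    refine ((h.tendsto_deriv_mul_rpow_nhdsLT ha.ne' hpq hα1 hgc hlim hq).div_const κ).congr' ?_
    filter_upwards [eventually_mem_nhdsWithin] with x hx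
    rw [← hγα, Real.rpow_neg (sub_pos.2 (mem_Iio.1 hx)).le]
    field_simp
  refine ⟨K / κ, div_pos hK hκ, hD, (hD.pos_mul_atTop (div_pos hK hκ) hPq).congr' ?_⟩
  filter_upwards [hPq.eventually_gt_atTop 0] with x hx
  exact div_mul_cancel₀ _ hx.ne'

theorem SolvesProfileEq.tendsto_div_psi_nhdsGT (h : SolvesProfileEq g a p q W) (ha : 0 < a)
    (hpq : p < q) (hα1 : 1 < α) (hα2 : α ≤ 2) (hgc : Continuous g) (hC : 0 < C)
    (hlim : Tendsto (fun s => |s| ^ α * g s) atBot (𝓝 C))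
    (hp : Tendsto (deriv W) (𝓝[>] p) atBot) :
    ∃ D > 0, Tendsto (fun x => W x / psi ((2 - α) / (α - 1)) (x - p)) (𝓝[>] p) (𝓝 D) ∧
      Tendsto W (𝓝[>] p) atTop := by
  have hneg : Tendsto Neg.neg (𝓝[>] p) (𝓝[<] (-p)) := by
    simpa using tendsto_neg_nhdsGT_neg (a := -p)
  have hp' : Tendsto (deriv fun x => W (-x)) (𝓝[<] (-p)) atTop := by
    rw [funext fun x => deriv_comp_neg W x]
    exact tendsto_neg_atBot_atTop.comp (hp.comp (by simpa using tendsto_neg_nhdsLT (a := -p)))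
  obtain ⟨D, hD, hWD, hW⟩ := h.comp_neg.tendsto_div_psi_nhdsLT ha (neg_lt_neg hpq) hα1 hα2
    (hgc.comp continuous_neg) hC (tendsto_abs_rpow_mul_comp_neg hlim) hp'
  refine ⟨D, hD, (hWD.comp hneg).congr fun x => ?_, (hW.comp hneg).congr fun x => ?_⟩ <;>
    simp [neg_add_eq_sub]

end Asymptotics

/-- existence, uniqueness (up to vertical translation) and asymptotics
of traveling wave profiles for `1 < α ≤ 2` (Proposition A.1 (a)). -/
theorem travelingWave_exists (b α : ℝ) (f g : ℝ → ℝ)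
    (hb : 0 < b) (hf : A1 f) (hg : A2 g α) (hα1 : 1 < α) (hα2 : α ≤ 2) :
    ∃ W : ℝ → ℝ, ∃ c : ℝ, 0 < c ∧ ContDiffOn ℝ 2 W (Ioo (-b) b) ∧
      (∀ x ∈ Ioo (-b) b, Function.invFun f c = g (deriv W x) * deriv (deriv W) x) ∧
      Tendsto (deriv W) (𝓝[<] b) atTop ∧ Tendsto (deriv W) (𝓝[>] (-b)) atBot ∧
      (∀ W' : ℝ → ℝ, ∀ c' : ℝ, 0 < c' → ContDiffOn ℝ 2 W' (Ioo (-b) b) →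
        (∀ x ∈ Ioo (-b) b, Function.invFun f c' = g (deriv W' x) * deriv (deriv W') x) →
        Tendsto (deriv W') (𝓝[<] b) atTop → Tendsto (deriv W') (𝓝[>] (-b)) atBot →
        c' = c ∧ ∃ k : ℝ, ∀ x ∈ Ioo (-b) b, W' x = W x + k) ∧
      Tendsto W (𝓝[<] b) atTop ∧ Tendsto W (𝓝[>] (-b)) atTop ∧
      (∃ Dp : ℝ, 0 < Dp ∧
        Tendsto (fun x => W x / psi ((2 - α) / (α - 1)) (b - x)) (𝓝[<] b) (𝓝 Dp)) ∧
      (∃ Dm : ℝ, 0 < Dm ∧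
        Tendsto (fun x => W x / psi ((2 - α) / (α - 1)) (b + x)) (𝓝[>] (-b)) (𝓝 Dm)) := by
  obtain ⟨hfc, hfm, hf0, hftop, hfbot⟩ := hf
  obtain ⟨hgc, hgpos, Cp, Cm, hCp, hCm, hgp, hgm⟩ := hg
  have hgi : Integrable g := integrable_of_tendsto_abs_rpow_mul hα1 hgc hgp hgm
  have hb' : -b < b := neg_lt_self hb
  obtain ⟨a, ha, W, hW, hWb, hWb'⟩ := exists_solvesProfileEq hgc hgpos hgi hb'
  have hfa : Function.invFun f (f a) = a := Function.leftInverse_invFun hfm.injective a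
  obtain ⟨Dp, hDp, hWDp, hWtop⟩ := hW.tendsto_div_psi_nhdsLT ha hb' hα1 hα2 hgc hCp hgp hWb
  obtain ⟨Dm, hDm, hWDm, hWtop'⟩ := hW.tendsto_div_psi_nhdsGT ha hb' hα1 hα2 hgc hCm hgm hWb'
  refine ⟨W, f a, hf0 ▸ hfm ha, hW.1, hfa.symm ▸ hW.2, hWb, hWb',
    fun W' c' _ hW'₁ hW'₂ hW'b hW'b' => ?_, hWtop, hWtop', ⟨Dp, hDp, hWDp⟩,
    ⟨Dm, hDm, by simpa only [sub_neg_eq_add, add_comm] using hWDm⟩⟩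
  obtain ⟨hc, hk⟩ := hW.unique ⟨hW'₁, hW'₂⟩ hgc hgpos hgi hb' hWb hWb' hW'b hW'b'
  refine ⟨?_, hk⟩
  rw [← Function.rightInverse_invFun (hfc.surjective hftop hfbot) c', hc]
end
end

section
/- Let b>0 and assume f,g∈C(ℝ) satisfy (A1) and (A2) with exponent α ≤ 1. Then there is no pair (W,c)∈C²((−b,b))×(0,∞) satisfying f^{−1}(c) = g(W′(x))W″(x) for all x∈(−b,b) together with lim_{x→b}W′(x)=+∞ and lim_{x→−b}W′(x)=−∞. -/
open Filter Set Topology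

noncomputable section

/-!
Write `G` for a primitive of `g` and `k = f⁻¹(c)`. The equation `g(W') W'' = k` says that
`G(W'(x)) - k x` is constant on `(-b, b)`, so `G ∘ W'` stays bounded as `x → b`. But for
`α ≤ 1` the function `g` decays at `+∞` no faster than `1/s`, so `G(s) → ∞` as `s → ∞`
(at least logarithmically), contradicting `W'(x) → ∞` as `x → b`.
-/

theorem A2.eventually_div_le {g : ℝ → ℝ} {α : ℝ} (hg : A2 g α) (hα : α ≤ 1) :
    ∃ C > 0, ∀ᶠ s in atTop, C / s ≤ g s := by
  obtain ⟨-, hgpos, Cgp, -, hCgp, -, hgtop, -⟩ := hg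
  refine ⟨Cgp / 2, by linarith, ?_⟩
  filter_upwards [hgtop.eventually (lt_mem_nhds (half_lt_self hCgp)),
    eventually_ge_atTop 1] with s hlt hs1
  have hs0 : 0 < s := by linarith
  rw [abs_of_pos hs0] at hlt
  have hpow : s ^ α ≤ s := by
    simpa using Real.rpow_le_rpow_of_exponent_le hs1 hα
  rw [div_le_iff₀ hs0]
  nlinarith [hgpos s]

theorem tendsto_integral_atTop_of_div_le {g : ℝ → ℝ} (hg : Continuous g) {C : ℝ} (hC : 0 < C)
    (hle : ∀ᶠ s in atTop, C / s ≤ g s) :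
    Tendsto (fun s => ∫ t in (0:ℝ)..s, g t) atTop atTop := by
  obtain ⟨s₀, hs₀⟩ := eventually_atTop.1 (hle.and (eventually_gt_atTop 0))
  have hs₀pos : 0 < s₀ := (hs₀ s₀ le_rfl).2
  have hlower : ∀ s ≥ s₀,
      (∫ t in (0:ℝ)..s₀, g t) + C * Real.log (s / s₀) ≤ ∫ t in (0:ℝ)..s, g t := by
    intro s hs
    have hlog : ∫ t in s₀..s, C / t = C * Real.log (s / s₀) := by
      simp only [div_eq_mul_inv C, intervalIntegral.integral_const_mul,
        integral_inv_of_pos hs₀pos (hs₀pos.trans_le hs)]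
    have hinv : ContinuousOn (fun t => C / t) (Icc s₀ s) :=
      continuousOn_const.div continuousOn_id fun t ht => (hs₀pos.trans_le ht.1).ne'
    have hmono : ∫ t in s₀..s, C / t ≤ ∫ t in s₀..s, g t :=
      intervalIntegral.integral_mono_on hs (hinv.intervalIntegrable_of_Icc hs)
        (hg.intervalIntegrable _ _) fun t ht => (hs₀ t ht.1).1
    rw [← intervalIntegral.integral_add_adjacent_intervals (hg.intervalIntegrable 0 s₀)
      (hg.intervalIntegrable s₀ s)]
    linarith
  refine tendsto_atTop_mono' atTop (eventually_atTop.2 ⟨s₀, hlower⟩) ?_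
  exact tendsto_atTop_add_const_left _ _ <| (Real.tendsto_log_atTop.comp
    (tendsto_id.atTop_div_const hs₀pos)).const_mul_atTop hC

theorem IsOpen.exists_eqOn_comp_of_mul_deriv_eq_const {G g V : ℝ → ℝ} {s : Set ℝ} {k : ℝ}
    (hs : IsOpen s) (hs' : IsPreconnected s) (hG : ∀ y, HasDerivAt G (g y) y)
    (hV : DifferentiableOn ℝ V s) (hODE : ∀ x ∈ s, g (V x) * deriv V x = k) :
    ∃ a, s.EqOn (G ∘ V) (fun x => k * x + a) := by
  have hderiv : ∀ x ∈ s, HasDerivAt (G ∘ V) k x := fun x hx => by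
    simpa [hODE x hx] using
      (hG (V x)).comp x (hV.differentiableAt (hs.mem_nhds hx)).hasDerivAt
  refine hs.exists_eq_add_of_deriv_eq hs' (fun x hx => (hderiv x hx).differentiableAt
    |>.differentiableWithinAt) (differentiableOn_id.const_mul k) fun x hx => ?_
  simp [(hderiv x hx).deriv]

theorem travelingWave_nonexists_general (b α : ℝ) (f g : ℝ → ℝ)
    (hb : 0 < b) (hg : A2 g α) (hα : α ≤ 1) :
    ¬ ∃ W : ℝ → ℝ, ∃ c : ℝ, 0 < c ∧ ContDiffOn ℝ 2 W (Ioo (-b) b) ∧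
      (∀ x ∈ Ioo (-b) b, Function.invFun f c = g (deriv W x) * deriv (deriv W) x) ∧
      Tendsto (deriv W) (𝓝[<] b) atTop ∧ Tendsto (deriv W) (𝓝[>] (-b)) atBot := by
  rintro ⟨W, c, -, hW, hODE, htop, -⟩
  set k := Function.invFun f c
  obtain ⟨C, hC, hle⟩ := hg.eventually_div_le hα
  have hGtop := tendsto_integral_atTop_of_div_le hg.1 hC hle
  have hV : DifferentiableOn ℝ (deriv W) (Ioo (-b) b) :=
    (hW.deriv_of_isOpen isOpen_Ioo (by norm_num)).differentiableOn one_ne_zero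
  obtain ⟨a, ha⟩ := isOpen_Ioo.exists_eqOn_comp_of_mul_deriv_eq_const isPreconnected_Ioo
    (fun y => (hg.1.integral_hasStrictDerivAt 0 y).hasDerivAt) hV fun x hx => (hODE x hx).symm
  have hbdd : ∀ᶠ x in 𝓝[<] b, ∫ t in (0:ℝ)..deriv W x, g t ≤ |k| * b + a := by
    filter_upwards [Ioo_mem_nhdsLT (by linarith : -b < b)] with x hx
    have hkx : k * x ≤ |k| * b := (le_abs_self _).trans <| by
      rw [abs_mul]; exact mul_le_mul_of_nonneg_left (abs_lt.2 hx).le (abs_nonneg k)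
    have hGV := ha hx
    rw [Function.comp_apply] at hGV
    linarith
  obtain ⟨x, hxgt, hxle⟩ := ((hGtop.comp htop).eventually_gt_atTop (|k| * b + a)).and hbdd
    |>.exists
  exact hxle.not_gt hxgt

/-- non-existence of traveling wave profiles for `α ≤ 1`
(Proposition A.1 (b)). -/
theorem travelingWave_nonexists (b α : ℝ) (f g : ℝ → ℝ)
    (hb : 0 < b) (hf : A1 f) (hg : A2 g α) (hα : α ≤ 1) :
    ¬ ∃ W : ℝ → ℝ, ∃ c : ℝ, 0 < c ∧ ContDiffOn ℝ 2 W (Ioo (-b) b) ∧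
      (∀ x ∈ Ioo (-b) b, Function.invFun f c = g (deriv W x) * deriv (deriv W) x) ∧
      Tendsto (deriv W) (𝓝[<] b) atTop ∧ Tendsto (deriv W) (𝓝[>] (-b)) atBot :=
  travelingWave_nonexists_general b α f g hb hg hα
end
end
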